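/- Almost-martingale property of the mean potential in the mixed regime: Let N ∈ ℕ with N ≥ 1, μ ∈ (0,1), w > 0, γ = w/(1−μ) with γ ≥ 1, and let u ∈ ℝ^N satisfy 0 ≤ u(i) ≤ 1 for all i. Set ū = (1/N) Σ_{i=1}^N u(i) and define the one-step expected mean potential E := Σ_{i=1}^{N} (u(i)/N) · ( (1/N) Σ_{j=1}^N Δ^i(u)(j) ) + (1 − ū) · μ ū, where (u(i)/N) = φ(u(i))/N is the probability that component i fires and 1 − ū is the probability that no component fires. Then | E − (μ + w) ū | ≤ γ/N. -/

import Mathlib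

/-!
Writing `S = ∑ u i` and `T = ∑ u i ^ 2`, the drift is exactly
`E - (μ + w) ū = -(μ T + w S) / N²`: firing resets one component, and this costs its
own contribution `μ u i + w`, averaged with weight `u i / N²`. Since `0 ≤ u i ^ 2 ≤ u i ≤ 1`,
`0 ≤ μ T + w S ≤ (μ + w) N`, and `μ + w ≤ w / (1 - μ)` is equivalent to `μ (1 - μ - w) ≤ 0`,
which holds because `γ ≥ 1` means `w ≥ 1 - μ`.
-/

/-- The firing map `Δ^{i}` : after component `i` fires, its potential resets to
`0` and every other component `j` gets potential `μ * u j + w`. -/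
def fireMap (N : ℕ) (μ w : ℝ) (i : Fin N) (u : Fin N → ℝ) : Fin N → ℝ :=
  fun j => if j = i then 0 else μ * u j + w

open Finset

lemma sum_fireMap (N : ℕ) (μ w : ℝ) (i : Fin N) (u : Fin N → ℝ) :
    ∑ j, fireMap N μ w i u j = μ * ∑ j, u j + N * w - (μ * u i + w) := by
  have h : ∀ j, fireMap N μ w i u j = (μ * u j + w) - if j = i then μ * u i + w else 0 := by
    intro j
    by_cases h : j = i <;> simp [fireMap, h]
  simp only [h, sum_sub_distrib, sum_ite_eq', mem_univ, if_true, sum_add_distrib, ← mul_sum]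
  simp

lemma expected_mean_sub_drift (N : ℕ) (hN : (N : ℝ) ≠ 0) (μ w : ℝ) (u : Fin N → ℝ) :
    (∑ i, (u i / N) * ((1 / N) * ∑ j, fireMap N μ w i u j))
        + (1 - (1 / N) * ∑ i, u i) * (μ * ((1 / N) * ∑ i, u i))
        - (μ + w) * ((1 / N) * ∑ i, u i)
      = -(μ * ∑ i, u i ^ 2 + w * ∑ i, u i) / N ^ 2 := by
  simp only [sum_fireMap]
  have h : ∀ i, u i / N * (1 / N * (μ * ∑ j, u j + N * w - (μ * u i + w)))
      = (μ * ∑ j, u j + N * w - w) / N ^ 2 * u i - μ / N ^ 2 * u i ^ 2 := by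
    intro i
    field_simp
    ring
  simp only [h, sum_sub_distrib, ← mul_sum]
  field_simp
  ring

lemma sum_sq_le_sum_of_unit_interval {ι : Type*} [Fintype ι] {u : ι → ℝ}
    (hu : ∀ i, 0 ≤ u i ∧ u i ≤ 1) : ∑ i, u i ^ 2 ≤ ∑ i, u i :=
  sum_le_sum fun i _ => by nlinarith [hu i]

lemma add_le_div_one_sub_of_one_le {μ w : ℝ} (hμ0 : 0 ≤ μ) (hμ1 : μ < 1)
    (hγ : 1 ≤ w / (1 - μ)) : μ + w ≤ w / (1 - μ) := by
  have h1μ : 0 < 1 - μ := by linarith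
  have hw : 1 - μ ≤ w := (one_le_div h1μ).mp hγ
  rw [le_div_iff₀ h1μ]
  nlinarith

/-- Almost-martingale property of the mean potential in the mixed
regime.  Let `γ = w/(1−μ) ≥ 1` and let `u ∈ ℝ^N` with `0 ≤ u i ≤ 1` for all
`i`.  With `ū = (1/N) Σ_i u i` and the one-step expected mean potential
`E = Σ_i (u i / N) ((1/N) Σ_j Δ^i(u)(j)) + (1 − ū) μ ū`
(component `i` fires with probability `φ(u i)/N = u i / N` and no component
fires with probability `1 − ū`), one has `|E − (μ + w) ū| ≤ γ/N`. -/
theorem mean_potential_almost_martingale (N : ℕ) (hN : 1 ≤ N) (μ w : ℝ)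
    (hμ0 : 0 < μ) (hμ1 : μ < 1) (hw : 0 < w)
    (hγ : 1 ≤ w / (1 - μ))
    (u : Fin N → ℝ) (hu : ∀ i, 0 ≤ u i ∧ u i ≤ 1)
    (ubar E : ℝ)
    (hubar : ubar = (1 / (N : ℝ)) * ∑ i, u i)
    (hE : E = (∑ i, (u i / (N : ℝ)) * ((1 / (N : ℝ)) * ∑ j, fireMap N μ w i u j))
        + (1 - ubar) * (μ * ubar)) :
    |E - (μ + w) * ubar| ≤ (w / (1 - μ)) / (N : ℝ) := by
  have hN0 : (0 : ℝ) < N := by exact_mod_cast hN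
  have hS0 : 0 ≤ ∑ i, u i := sum_nonneg fun i _ => (hu i).1
  have hSN : ∑ i, u i ≤ N := by
    simpa using sum_le_sum fun i (_ : i ∈ univ) => (hu i).2
  have hT0 : 0 ≤ ∑ i, u i ^ 2 := sum_nonneg fun i _ => sq_nonneg (u i)
  have hTS := sum_sq_le_sum_of_unit_interval hu
  subst hE hubar
  rw [expected_mean_sub_drift N hN0.ne', abs_div, abs_neg, abs_of_nonneg (by positivity),
    abs_of_pos (by positivity), div_le_div_iff₀ (by positivity) hN0]
  calc (μ * ∑ i, u i ^ 2 + w * ∑ i, u i) * N ≤ ((μ + w) * ∑ i, u i) * N := by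
        gcongr
        nlinarith
    _ ≤ ((μ + w) * N) * N := by gcongr
    _ ≤ w / (1 - μ) * N ^ 2 := by
      rw [mul_assoc, ← sq]
      gcongr
      exact add_le_div_one_sub_of_one_le hμ0.le hμ1 hγ
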